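/- arXiv:2405.14833 — 7 statements merged into one kernel-verified Lean document; each statement's English description precedes it below -/
import Mathlib

section
/- Let G be a finite simple graph on vertex set [n] and let S ⊆ [n] be a nonempty subset with b_G(S) = b_G (i.e., S minimizes b_G(S)). Then S is a cut set of G: for every i ∈ S, the induced subgraph of G on [n] ∖ (S ∖ {i}) has strictly fewer connected components than the induced subgraph of G on [n] ∖ S. -/
/-- `c(S)`: the number of connected components of the induced subgraph of `G`
on the complement of `S`. -/
noncomputable def numComponents {n : ℕ} (G : SimpleGraph (Fin n))
    (S : Finset (Fin n)) : ℕ :=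
  Nat.card ((G.induce ((↑S : Set (Fin n))ᶜ)).ConnectedComponent)

/-- `b_G(S) = 2|S| + (n - |S|) - c(S)`. -/
noncomputable def bOf {n : ℕ} (G : SimpleGraph (Fin n)) (S : Finset (Fin n)) : ℕ :=
  2 * S.card + (n - S.card) - numComponents G S

/-- `b_G`: the minimum of `b_G(S)` over all subsets `S ⊆ [n]`. -/
noncomputable def bMin {n : ℕ} (G : SimpleGraph (Fin n)) : ℕ :=
  sInf (Set.range (bOf G))

lemma numComponents_le {n : ℕ} (G : SimpleGraph (Fin n)) (S : Finset (Fin n)) :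
    numComponents G S ≤ n - S.card := by
  unfold numComponents
  have h1 : Nat.card ((G.induce ((↑S : Set (Fin n))ᶜ)).ConnectedComponent)
      ≤ Nat.card ((↑S : Set (Fin n))ᶜ : Set (Fin n)) :=
    Nat.card_le_card_of_surjective _ (fun c => c.exists_rep)
  have h2 : Nat.card ((↑S : Set (Fin n))ᶜ : Set (Fin n)) = n - S.card := by
    rw [Nat.card_eq_fintype_card, Fintype.card_compl_set, Fintype.card_fin]
    simp
  omega

/-- If `S` is a nonempty subset minimizing `b_G(S)`, then `S` is a cut set of `G`:
removing any `i ∈ S` from `S` strictly decreases the number of connected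
components of the induced subgraph on the complement. -/
theorem cutSet_of_bOf_eq_bMin {n : ℕ} (G : SimpleGraph (Fin n))
    (S : Finset (Fin n)) (hS : S.Nonempty) (hmin : bOf G S = bMin G) :
    ∀ i ∈ S, numComponents G (S.erase i) < numComponents G S := by
  intro i hi
  have hle : bMin G ≤ bOf G (S.erase i) := Nat.sInf_le ⟨S.erase i, rfl⟩
  rw [← hmin] at hle
  have hcard : (S.erase i).card = S.card - 1 := Finset.card_erase_of_mem hi
  have h1 : numComponents G S ≤ n - S.card := numComponents_le G S
  have h2 : numComponents G (S.erase i) ≤ n - (S.erase i).card := numComponents_le G _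
  have hs1 : 1 ≤ S.card := Finset.card_pos.mpr hS
  have hsn : S.card ≤ n := by
    simpa using Finset.card_le_card (Finset.subset_univ S)
  unfold bOf at hle
  omega
end

section
/- Let G be a finite simple graph on vertex set [n], let S ⊆ [n] be nonempty, and let i ∈ S be a vertex such that the neighbors of i lying outside S meet at most one connected component of the induced subgraph of G on [n] ∖ S. Then b_G(S ∖ {i}) < b_G(S). -/
open SimpleGraph

/-- If `i ∈ S` is a vertex whose neighbours outside `S` meet at most one
connected component of the induced subgraph of `G` on the complement of `S`,
then `b_G(S \ {i}) < b_G(S)`. -/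
theorem bOf_erase_lt {n : ℕ} (G : SimpleGraph (Fin n)) (S : Finset (Fin n))
    (hS : S.Nonempty) (i : Fin n) (hi : i ∈ S)
    (h : {C : (G.induce ((↑S : Set (Fin n))ᶜ)).ConnectedComponent |
        ∃ w : ((↑S : Set (Fin n))ᶜ : Set (Fin n)), G.Adj i ↑w ∧
          SimpleGraph.connectedComponentMk _ w = C}.Subsingleton) :
    bOf G (S.erase i) < bOf G S := by
  classical
  set A : Set (Fin n) := (↑S : Set (Fin n))ᶜ with hA
  set B : Set (Fin n) := (↑(S.erase i) : Set (Fin n))ᶜ with hB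
  have hAB : A ⊆ B := by
    intro x hx
    simp only [hA, hB, Set.mem_compl_iff, Finset.coe_erase, Set.mem_diff,
      Finset.mem_coe, Set.mem_singleton_iff] at hx ⊢
    intro hxe
    exact hx hxe.1
  -- the hom from the small induced graph to the big one
  let φ : (G.induce A) →g (G.induce B) :=
    ⟨fun v => ⟨v.1, hAB v.2⟩, fun hadj => hadj⟩
  let ψ : (G.induce A).ConnectedComponent → (G.induce B).ConnectedComponent :=
    SimpleGraph.ConnectedComponent.map φ
  -- the vertex labelling of B
  let g0 : B → Option ((G.induce A).ConnectedComponent) := fun x =>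
    if hx : (x : Fin n) ∈ A then
      some ((G.induce A).connectedComponentMk ⟨x, hx⟩)
    else if hne : ∃ w : A, G.Adj i ↑w then
      some ((G.induce A).connectedComponentMk hne.choose)
    else none
  have hBnotA : ∀ x : B, (x : Fin n) ∉ A → (x : Fin n) = i := by
    intro x hx
    have hxS : (x : Fin n) ∈ S := by
      by_contra hxS
      exact hx (by simpa [hA] using hxS)
    have hxB : (x : Fin n) ∉ S.erase i := by
      have hx2 := x.2
      simp only [hB, Set.mem_compl_iff, Finset.mem_coe] at hx2
      exact hx2
    by_contra hne
    exact hxB (Finset.mem_erase.2 ⟨hne, hxS⟩)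
  have key : ∀ u v : B, (G.induce B).Adj u v → g0 u = g0 v := by
    intro u v huv
    have hadj : G.Adj (u : Fin n) (v : Fin n) := huv
    by_cases hu : (u : Fin n) ∈ A <;> by_cases hv : (v : Fin n) ∈ A
    · have hadj' : (G.induce A).Adj ⟨u, hu⟩ ⟨v, hv⟩ := hadj
      simp only [g0, dif_pos hu, dif_pos hv]
      exact congrArg some (SimpleGraph.ConnectedComponent.sound hadj'.reachable)
    · -- v = i, u ∈ A
      have hvi : (v : Fin n) = i := hBnotA v hv
      have hiu : G.Adj i (u : Fin n) := by rw [← hvi]; exact hadj.symm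
      have hne : ∃ w : A, G.Adj i ↑w := ⟨⟨u, hu⟩, hiu⟩
      simp only [g0, dif_pos hu, dif_neg hv, dif_pos hne]
      refine congrArg some ?_
      exact h ⟨⟨u, hu⟩, hiu, rfl⟩ ⟨hne.choose, hne.choose_spec, rfl⟩
    · -- u = i, v ∈ A
      have hui : (u : Fin n) = i := hBnotA u hu
      have hiv : G.Adj i (v : Fin n) := by rw [← hui]; exact hadj
      have hne : ∃ w : A, G.Adj i ↑w := ⟨⟨v, hv⟩, hiv⟩
      simp only [g0, dif_neg hu, dif_pos hv, dif_pos hne]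
      refine congrArg some ?_
      exact h ⟨hne.choose, hne.choose_spec, rfl⟩ ⟨⟨v, hv⟩, hiv, rfl⟩
    · exfalso
      have hui : (u : Fin n) = i := hBnotA u hu
      have hvi : (v : Fin n) = i := hBnotA v hv
      exact G.irrefl (by rw [hui, hvi] at hadj; exact hadj)
  have walkkey : ∀ {u v : B} (_ : (G.induce B).Walk u v), g0 u = g0 v := by
    intro u v p
    induction p with
    | nil => rfl
    | cons hadj p ih => exact (key _ _ hadj).trans ih
  have hinj : Function.Injective ψ := by
    intro C D hCD
    induction C using SimpleGraph.ConnectedComponent.ind with | _ v =>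
    induction D using SimpleGraph.ConnectedComponent.ind with | _ w =>
    have hmk : (G.induce B).connectedComponentMk (φ v) =
        (G.induce B).connectedComponentMk (φ w) := by
      simpa [ψ, SimpleGraph.ConnectedComponent.map_mk] using hCD
    obtain ⟨p⟩ := (SimpleGraph.ConnectedComponent.exact hmk)
    have hg := walkkey p
    have g0eq : ∀ (u : ↑B) (hu : (u : Fin n) ∈ A),
        g0 u = some ((G.induce A).connectedComponentMk ⟨u, hu⟩) :=
      fun u hu => dif_pos hu
    rw [g0eq (φ v) v.2, g0eq (φ w) w.2] at hg
    exact Option.some_injective _ hg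
  have hcomp : numComponents G S ≤ numComponents G (S.erase i) := by
    simpa [numComponents, ← hA, ← hB] using Nat.card_le_card_of_injective ψ hinj
  -- c(S) ≤ n - |S|
  have hsurj : Function.Surjective
      ((G.induce A).connectedComponentMk) := fun C => C.exists_rep
  have hcardA : Nat.card A = n - S.card := by
    simp only [hA, Nat.card_eq_fintype_card]
    rw [Fintype.card_compl_set]
    simp
  have hcS : numComponents G S ≤ n - S.card := by
    have := Nat.card_le_card_of_surjective _ hsurj
    rw [hcardA] at this
    simpa [numComponents, ← hA] using this
  have hs1 : 1 ≤ S.card := Finset.card_pos.2 hS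
  have hsn : S.card ≤ n := by
    simpa using Finset.card_le_card (Finset.subset_univ S)
  have hce : (S.erase i).card = S.card - 1 := Finset.card_erase_of_mem hi
  unfold bOf
  rw [hce]
  omega
end

section
/- Let G be a finite simple graph on vertex set [n], let v be a vertex of G, and let S ⊆ [n] with v ∉ S. Then the induced subgraphs of G and of G_v on [n] ∖ S have exactly the same connected components (as a partition of [n] ∖ S); in particular b_{G_v}(S) = b_G(S). -/
/-- `G_v`: the graph obtained from `G` by adding all edges between distinct
neighbours of `v`. -/
def addNbrClique {V : Type*} (G : SimpleGraph V) (v : V) : SimpleGraph V :=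
  G ⊔ SimpleGraph.fromRel (fun a b => G.Adj v a ∧ G.Adj v b)

/-- If `v ∉ S`, then the induced subgraphs of `G` and of `G_v` on the complement
of `S` have exactly the same connected components (two vertices are reachable
from one another in one iff in the other); in particular `b_{G_v}(S) = b_G(S)`. -/
theorem components_addNbrClique_eq {n : ℕ} (G : SimpleGraph (Fin n)) (v : Fin n)
    (S : Finset (Fin n)) (hv : v ∉ S) :
    (∀ a b : ((↑S : Set (Fin n))ᶜ : Set (Fin n)),
      (G.induce ((↑S : Set (Fin n))ᶜ)).Reachable a b ↔
        ((addNbrClique G v).induce ((↑S : Set (Fin n))ᶜ)).Reachable a b) ∧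
    bOf (addNbrClique G v) S = bOf G S := by
  set s : Set (Fin n) := ((↑S : Set (Fin n))ᶜ) with hs
  have hvs : v ∈ s := by simp [hs, hv]
  have key : ∀ a b : s, (G.induce s).Reachable a b ↔
      ((addNbrClique G v).induce s).Reachable a b := by
    intro a b
    constructor
    · intro h
      refine h.mono ?_
      intro x y hxy
      exact Or.inl hxy
    · intro h
      obtain ⟨w⟩ := h
      induction w with
      | nil => exact SimpleGraph.Reachable.refl _
      | @cons x y z hxy _ ih =>
        refine SimpleGraph.Reachable.trans ?_ ih
        have hadj : (addNbrClique G v).Adj (x : Fin n) (y : Fin n) := hxy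
        rcases hadj with hG | hN
        · exact SimpleGraph.Adj.reachable hG
        · obtain ⟨hne, hcase⟩ := hN
          have hva : G.Adj v x ∧ G.Adj v y := by tauto
          have h1 : (G.induce s).Adj x ⟨v, hvs⟩ := hva.1.symm
          have h2 : (G.induce s).Adj (⟨v, hvs⟩ : s) y := hva.2
          exact (h1.reachable).trans h2.reachable
  refine ⟨key, ?_⟩
  have : numComponents (addNbrClique G v) S = numComponents G S := by
    unfold numComponents
    exact Nat.card_congr (Quot.congr (Equiv.refl _) (fun a b => (key a b).symm))
  simp [bOf, this]
end

section
/- Let G be a finite simple graph on vertex set [n], let S ⊆ [n], and let v ∉ S be a vertex having at least one neighbor outside S. Then b_{G_v ∖ v}(S) = b_G(S) − 1, where G_v ∖ v is regarded as a graph on the vertex set [n] ∖ {v}. -/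
/-- The number of connected components of the induced subgraph of `H ∖ v`
(regarded as a graph on `[n] ∖ {v}`) on its vertex set minus `S`, i.e. the
number of connected components of the induced subgraph of `H` on the
complement of `S ∪ {v}`. -/
noncomputable def numComponentsDel {n : ℕ} (H : SimpleGraph (Fin n)) (v : Fin n)
    (S : Finset (Fin n)) : ℕ :=
  Nat.card ((H.induce (((↑S : Set (Fin n)) ∪ {v})ᶜ)).ConnectedComponent)

/-- `b_{H ∖ v}(S) = 2|S| + ((n-1) - |S|) - c_{H ∖ v}(S)`, for `H ∖ v` regarded
as a graph on the `n - 1` vertices `[n] ∖ {v}`. -/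
noncomputable def bOfDel {n : ℕ} (H : SimpleGraph (Fin n)) (v : Fin n)
    (S : Finset (Fin n)) : ℕ :=
  2 * S.card + ((n - 1) - S.card) - numComponentsDel H v S

open SimpleGraph

/-- If `v ∉ S` has at least one neighbour outside `S`, then
`b_{G_v ∖ v}(S) = b_G(S) - 1`. -/
theorem bOfDel_addNbrClique_eq {n : ℕ} (G : SimpleGraph (Fin n)) (v : Fin n)
    (S : Finset (Fin n)) (hv : v ∉ S) (hw : ∃ w, G.Adj v w ∧ w ∉ S) :
    bOfDel (addNbrClique G v) v S = bOf G S - 1 := by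
  classical
  obtain ⟨w, hvw, hwS⟩ := hw
  set A : Set (Fin n) := (↑S : Set (Fin n))ᶜ with hA
  set B : Set (Fin n) := ((↑S : Set (Fin n)) ∪ {v})ᶜ with hB
  have hvA : v ∈ A := by simpa [hA] using hv
  have hwA : w ∈ A := by simpa [hA] using hwS
  have memB : ∀ x : Fin n, x ∈ A → x ≠ v → x ∈ B := by
    intro x hx hxv
    simp only [hB, Set.mem_compl_iff, Set.mem_union, Set.mem_singleton_iff]
    push_neg
    exact ⟨by simpa [hA] using hx, hxv⟩
  have hwB : w ∈ B := memB w hwA hvw.ne'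
  have hBA : ∀ x : Fin n, x ∈ B → x ∈ A := by
    intro x hx
    simp only [hB, Set.mem_compl_iff, Set.mem_union, Set.mem_singleton_iff] at hx
    push_neg at hx
    simpa [hA] using hx.1
  have hBv : ∀ x : Fin n, x ∈ B → x ≠ v := by
    intro x hx
    simp only [hB, Set.mem_compl_iff, Set.mem_union, Set.mem_singleton_iff] at hx
    push_neg at hx
    exact hx.2
  set GA := G.induce A with hGA
  set GB := (addNbrClique G v).induce B with hGB
  -- reachability between neighbours of v in GB
  have nbr_reach : ∀ a b : ↥B, G.Adj v a → G.Adj v b → GB.Reachable a b := by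
    intro a b ha hb
    by_cases hab : a = b
    · subst hab; rfl
    · refine Adj.reachable ?_
      show (addNbrClique G v).Adj a b
      refine Or.inr ?_
      rw [fromRel_adj]
      exact ⟨fun h => hab (Subtype.ext h), Or.inl ⟨ha, hb⟩⟩
  let toB : ↥A → ↥B := fun x =>
    if h : (x : Fin n) = v then ⟨w, hwB⟩ else ⟨x, memB x x.2 h⟩
  have keyf : ∀ x y : ↥A, GA.Adj x y →
      GB.connectedComponentMk (toB x) = GB.connectedComponentMk (toB y) := by
    intro x y hxy
    have hadj : G.Adj (x : Fin n) (y : Fin n) := hxy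
    by_cases hx : (x : Fin n) = v
    · have hy : (y : Fin n) ≠ v := by rintro rfl; exact G.irrefl (hx ▸ hadj)
      have hTx : toB x = ⟨w, hwB⟩ := dif_pos hx
      have hTy : toB y = ⟨(y : Fin n), memB y y.2 hy⟩ := dif_neg hy
      rw [hTx, hTy]
      exact ConnectedComponent.sound (nbr_reach _ _ hvw (hx ▸ hadj))
    · by_cases hy : (y : Fin n) = v
      · have hTx : toB x = ⟨(x : Fin n), memB x x.2 hx⟩ := dif_neg hx
        have hTy : toB y = ⟨w, hwB⟩ := dif_pos hy
        rw [hTx, hTy]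
        exact ConnectedComponent.sound
          ((nbr_reach _ _ hvw (hy ▸ hadj.symm)).symm)
      · have hTx : toB x = ⟨(x : Fin n), memB x x.2 hx⟩ := dif_neg hx
        have hTy : toB y = ⟨(y : Fin n), memB y y.2 hy⟩ := dif_neg hy
        rw [hTx, hTy]
        refine ConnectedComponent.sound (Adj.reachable ?_)
        show (addNbrClique G v).Adj _ _
        exact Or.inl hadj
  have keyg : ∀ x y : ↥B, GB.Adj x y →
      GA.connectedComponentMk ⟨x, hBA x x.2⟩ = GA.connectedComponentMk ⟨y, hBA y y.2⟩ := by
    intro x y hxy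
    have hadj : (addNbrClique G v).Adj (x : Fin n) (y : Fin n) := hxy
    rcases hadj with h | h
    · exact ConnectedComponent.sound (Adj.reachable (by exact h : GA.Adj _ _))
    · rw [fromRel_adj] at h
      have hx : G.Adj v x ∧ G.Adj v y := by tauto
      refine ConnectedComponent.sound ?_
      have h1 : GA.Adj ⟨x, hBA x x.2⟩ ⟨v, hvA⟩ := by exact hx.1.symm
      have h2 : GA.Adj ⟨v, hvA⟩ ⟨y, hBA y y.2⟩ := by exact hx.2
      exact h1.reachable.trans h2.reachable
  have keyf' : ∀ (x y : ↥A), GA.Walk x y →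
      GB.connectedComponentMk (toB x) = GB.connectedComponentMk (toB y) := by
    intro x y p
    induction p with
    | nil => rfl
    | cons h _ ih => exact (keyf _ _ h).trans ih
  have keyg' : ∀ (x y : ↥B), GB.Walk x y →
      GA.connectedComponentMk ⟨x, hBA x x.2⟩ = GA.connectedComponentMk ⟨y, hBA y y.2⟩ := by
    intro x y p
    induction p with
    | nil => rfl
    | cons h _ ih => exact (keyg _ _ h).trans ih
  let f : GA.ConnectedComponent → GB.ConnectedComponent :=
    ConnectedComponent.lift (fun x => GB.connectedComponentMk (toB x))
      (fun x y p _ => keyf' x y p)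
  let g : GB.ConnectedComponent → GA.ConnectedComponent :=
    ConnectedComponent.lift (fun x => GA.connectedComponentMk ⟨x, hBA x x.2⟩)
      (fun x y p _ => keyg' x y p)
  have hgf : ∀ c, g (f c) = c := by
    refine ConnectedComponent.ind ?_
    intro x
    show GA.connectedComponentMk ⟨((toB x : ↥B) : Fin n), hBA _ (toB x).2⟩
      = GA.connectedComponentMk x
    by_cases hx : (x : Fin n) = v
    · have hT : toB x = ⟨w, hwB⟩ := dif_pos hx
      have e : (⟨((toB x : ↥B) : Fin n), hBA _ (toB x).2⟩ : ↥A) = ⟨w, hwA⟩ :=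
        Subtype.ext (by rw [hT])
      rw [e]
      refine ConnectedComponent.sound (Adj.reachable ?_)
      have hadj : G.Adj w (x : Fin n) := hx ▸ hvw.symm
      exact hadj
    · have hT : toB x = ⟨x, memB x x.2 hx⟩ := dif_neg hx
      have e : (⟨((toB x : ↥B) : Fin n), hBA _ (toB x).2⟩ : ↥A) = x :=
        Subtype.ext (by rw [hT])
      rw [e]
  have hfg : ∀ c, f (g c) = c := by
    refine ConnectedComponent.ind ?_
    intro x
    show GB.connectedComponentMk (toB ⟨x, hBA x x.2⟩) = GB.connectedComponentMk x
    have hx : ((⟨(x : Fin n), hBA x x.2⟩ : ↥A) : Fin n) ≠ v := hBv x x.2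
    have hT : toB ⟨x, hBA x x.2⟩ = ⟨x, memB x (hBA x x.2) hx⟩ := dif_neg hx
    rw [hT]
  have hcardeq : numComponentsDel (addNbrClique G v) v S = numComponents G S := by
    unfold numComponentsDel numComponents
    exact Nat.card_congr ⟨g, f, hfg, hgf⟩
  -- cardinality of A
  have hcardA : Nat.card ↥A = n - S.card := by
    have hAe : A = ↑(Sᶜ : Finset (Fin n)) := by
      simp [hA]
    rw [hAe, Nat.card_coe_set_eq, Set.ncard_coe_finset, Finset.card_compl,
      Fintype.card_fin]
  have hfinA : Finite ↥A := Set.Finite.to_subtype (Set.toFinite A)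
  have hfinC : Finite GA.ConnectedComponent := Quot.finite _
  have hlt : Nat.card GA.ConnectedComponent < Nat.card ↥A := by
    have fA := Fintype.ofFinite ↥A
    have fC := Fintype.ofFinite GA.ConnectedComponent
    rw [Nat.card_eq_fintype_card, Nat.card_eq_fintype_card]
    refine Fintype.card_lt_of_surjective_not_injective GA.connectedComponentMk
      (fun c => c.exists_rep) ?_
    intro hinj
    have : (⟨v, hvA⟩ : ↥A) = ⟨w, hwA⟩ := by
      apply hinj
      exact ConnectedComponent.sound (Adj.reachable (by exact hvw : GA.Adj _ _))
    exact hvw.ne (congrArg Subtype.val this)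
  have hcc : numComponents G S < n - S.card := by
    rw [← hcardA]
    exact hlt
  have hsn : S.card < n := by
    omega
  unfold bOfDel bOf
  rw [hcardeq]
  omega
end

section
/- Let G be a finite simple graph on vertex set [n], let S ⊆ [n], and let v ∉ S be a vertex having at least one neighbor outside S. Let K be the connected component of v in the induced subgraph of G on [n] ∖ S, and let d ≥ 1 be the number of connected components of K ∖ v. Then b_{G ∖ v}(S) = b_G(S) − d; in particular b_{G ∖ v}(S) < b_G(S). -/
open SimpleGraph

/-- Transfer a walk in `G.induce A` whose support lies in `B` to reachability in
`G.induce B`. -/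
lemma walk_transfer {V : Type*} (G : SimpleGraph V) {A B : Set V} :
    ∀ {a b : ↥A} (p : (G.induce A).Walk a b), (∀ z ∈ p.support, (z : V) ∈ B) →
      ∀ (ha : (a : V) ∈ B) (hb : (b : V) ∈ B), (G.induce B).Reachable ⟨a, ha⟩ ⟨b, hb⟩ := by
  intro a b p
  induction p with
  | nil => intro _ ha hb; exact Reachable.refl _
  | @cons a c b h q ih =>
    intro hp ha hb
    have hc : (c : V) ∈ B := hp c (by simp)
    have hadj : (G.induce B).Adj ⟨(a : V), ha⟩ ⟨(c : V), hc⟩ := h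
    exact hadj.reachable.trans (ih (fun z hz => hp z (by simp [hz])) hc hb)

/-- Let `v ∉ S` have at least one neighbour outside `S`, let `K` be the
connected component of `v` in the induced subgraph of `G` on the complement of
`S`, and let `d` be the number of connected components of `K ∖ v`. Then
`d ≥ 1` and `b_{G ∖ v}(S) = b_G(S) - d`; in particular `b_{G ∖ v}(S) < b_G(S)`. -/
theorem bOfDel_eq_bOf_sub {n : ℕ} (G : SimpleGraph (Fin n)) (v : Fin n)
    (S : Finset (Fin n)) (hv : v ∉ S) (hw : ∃ w, G.Adj v w ∧ w ∉ S) :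
    let Sc : Set (Fin n) := (↑S : Set (Fin n))ᶜ
    let vc : Sc := ⟨v, hv⟩
    -- the vertex set of `K ∖ v`, where `K` is the component of `v`
    let Kdel : Set Sc := {u | (G.induce Sc).Reachable u vc ∧ u ≠ vc}
    -- the number of connected components of `K ∖ v`
    let d : ℕ := Nat.card (((G.induce Sc).induce Kdel).ConnectedComponent)
    1 ≤ d ∧ bOfDel G v S = bOf G S - d ∧ bOfDel G v S < bOf G S := by
  intro Sc vc Kdel d
  classical
  -- abbreviations (transparent local lets)
  let A : Set (Fin n) := (↑S : Set (Fin n))ᶜ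
  let B : Set (Fin n) := ((↑S : Set (Fin n)) ∪ {v})ᶜ
  let GA : SimpleGraph ↥A := G.induce A
  let GB : SimpleGraph ↥B := G.induce B
  let GK : SimpleGraph ↥Kdel := GA.induce Kdel
  let K : GA.ConnectedComponent := GA.connectedComponentMk vc
  have hvc : (vc : Fin n) = v := rfl
  have memKdel : ∀ (x : ↥A), GA.Reachable x vc → x ≠ vc → x ∈ Kdel :=
    fun x h hne => ⟨h, hne⟩
  have Kdel_spec : ∀ x : ↥A, x ∈ Kdel → GA.Reachable x vc ∧ x ≠ vc := fun x h => h
  have hBA : ∀ x : Fin n, x ∈ B → x ∈ A := by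
    intro x hx
    simp only [B, Set.mem_compl_iff, Set.mem_union, Set.mem_singleton_iff] at hx
    exact fun h => hx (Or.inl h)
  have hBv : ∀ x : Fin n, x ∈ B → x ≠ v := by
    intro x hx
    simp only [B, Set.mem_compl_iff, Set.mem_union, Set.mem_singleton_iff] at hx
    exact fun h => hx (Or.inr h)
  have hmemB : ∀ x : Fin n, x ∈ A → x ≠ v → x ∈ B := by
    intro x hxA hxv
    simp only [B, Set.mem_compl_iff, Set.mem_union, Set.mem_singleton_iff]
    rintro (h | h)
    · exact hxA h
    · exact hxv h
  haveI : Finite GA.ConnectedComponent := Quot.finite _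
  haveI : Finite GB.ConnectedComponent := Quot.finite _
  haveI : Finite GK.ConnectedComponent := Quot.finite _
  -- the vertex-level map
  let φ : ↥B → ({C : GA.ConnectedComponent // C ≠ K} ⊕ GK.ConnectedComponent) := fun u =>
    if h : GA.Reachable ⟨u.1, hBA _ u.2⟩ vc then
      Sum.inr (GK.connectedComponentMk ⟨⟨u.1, hBA _ u.2⟩,
        memKdel _ h (fun he => hBv u.1 u.2 ((congrArg Subtype.val he).trans hvc))⟩)
    else
      Sum.inl ⟨GA.connectedComponentMk ⟨u.1, hBA _ u.2⟩,
        fun he => h (ConnectedComponent.exact he)⟩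
  have hφadj : ∀ x y : ↥B, GB.Adj x y → φ x = φ y := by
    intro x y hxy
    have hadjA : GA.Adj ⟨x.1, hBA _ x.2⟩ ⟨y.1, hBA _ y.2⟩ := hxy
    simp only [φ]
    split_ifs with h1 h2 h2
    · congr 1
      apply ConnectedComponent.connectedComponentMk_eq_of_adj
      exact hadjA
    · exact absurd (hadjA.symm.reachable.trans h1) h2
    · exact absurd (hadjA.reachable.trans h2) h1
    · congr 1
      exact Subtype.ext (ConnectedComponent.connectedComponentMk_eq_of_adj hadjA)
  have hφwalk : ∀ (x y : ↥B) (p : GB.Walk x y), p.IsPath → φ x = φ y := by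
    intro x y p hp
    clear hp
    induction p with
    | nil => rfl
    | cons h q ih => exact (hφadj _ _ h).trans ih
  let Φ : GB.ConnectedComponent → ({C : GA.ConnectedComponent // C ≠ K} ⊕ GK.ConnectedComponent) :=
    ConnectedComponent.lift φ hφwalk
  have hΦmk : ∀ u : ↥B, Φ (GB.connectedComponentMk u) = φ u := fun u => rfl
  -- injectivity
  have hinj : Function.Injective Φ := by
    intro c1 c2
    refine ConnectedComponent.ind₂ (fun x y hxy => ?_) c1 c2
    rw [hΦmk, hΦmk] at hxy
    by_cases h1 : GA.Reachable ⟨x.1, hBA _ x.2⟩ vc <;>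
      by_cases h2 : GA.Reachable ⟨y.1, hBA _ y.2⟩ vc
    · -- both in K: use the hom GK →g GB
      simp only [φ, dif_pos h1, dif_pos h2] at hxy
      have hr : GK.Reachable _ _ := ConnectedComponent.exact (Sum.inr_injective hxy)
      apply ConnectedComponent.sound
      let hom : GK →g GB := ⟨fun z => ⟨z.1.1, hmemB _ z.1.2
        (fun hzv => (Kdel_spec _ z.2).2 (Subtype.ext (hzv.trans hvc.symm)))⟩, fun a => a⟩
      exact hr.map hom
    · simp only [φ, dif_pos h1, dif_neg h2] at hxy
      simp at hxy
    · simp only [φ, dif_neg h1, dif_pos h2] at hxy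
      simp at hxy
    · simp only [φ, dif_neg h1, dif_neg h2] at hxy
      have hr : GA.Reachable ⟨x.1, hBA _ x.2⟩ ⟨y.1, hBA _ y.2⟩ :=
        ConnectedComponent.exact (Subtype.mk_eq_mk.mp (Sum.inl_injective hxy))
      obtain ⟨p⟩ := hr
      have hsup : ∀ z ∈ p.support, (z : Fin n) ∈ B := by
        intro z hz
        refine hmemB _ z.2 (fun hzv => ?_)
        have hzvc : z = vc := Subtype.ext (hzv.trans hvc.symm)
        exact h1 (hzvc ▸ ⟨p.takeUntil z hz⟩)
      exact ConnectedComponent.sound (walk_transfer G p hsup x.2 y.2)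
  -- surjectivity
  have hsurj : Function.Surjective Φ := by
    rintro (⟨C, hC⟩ | D)
    · obtain ⟨u, rfl⟩ := C.exists_rep
      have hune : (u : Fin n) ≠ v := by
        intro h
        exact hC (congrArg GA.connectedComponentMk (Subtype.ext h))
      have huB : (u : Fin n) ∈ B := hmemB _ u.2 hune
      refine ⟨GB.connectedComponentMk ⟨u.1, huB⟩, ?_⟩
      have hnr : ¬ GA.Reachable ⟨(u : Fin n), hBA _ huB⟩ vc := by
        intro h
        exact hC (ConnectedComponent.sound h)
      rw [hΦmk]
      simp only [φ, dif_neg hnr]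
      rfl
    · obtain ⟨k, rfl⟩ := D.exists_rep
      have hk := Kdel_spec k.1 k.2
      have hkB : (k.1 : Fin n) ∈ B :=
        hmemB _ k.1.2 (fun h => hk.2 (Subtype.ext (h.trans hvc.symm)))
      refine ⟨GB.connectedComponentMk ⟨(k.1 : Fin n), hkB⟩, ?_⟩
      have hr : GA.Reachable ⟨(k.1 : Fin n), hBA _ hkB⟩ vc := hk.1
      rw [hΦmk]
      simp only [φ, dif_pos hr]
      rfl
  have hcard : Nat.card GB.ConnectedComponent
      = Nat.card {C : GA.ConnectedComponent // C ≠ K} + Nat.card GK.ConnectedComponent := by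
    rw [← Nat.card_sum]
    exact Nat.card_eq_of_bijective Φ ⟨hinj, hsurj⟩
  have hone : Nat.card {C : GA.ConnectedComponent // C = K} = 1 := by
    haveI : Unique {C : GA.ConnectedComponent // C = K} :=
      ⟨⟨⟨K, rfl⟩⟩, fun x => Subtype.ext x.2⟩
    exact Nat.card_unique
  have hcK : Nat.card GA.ConnectedComponent
      = 1 + Nat.card {C : GA.ConnectedComponent // C ≠ K} := by
    rw [← Nat.card_congr (Equiv.sumCompl (fun C : GA.ConnectedComponent => C = K)),
      Nat.card_sum, hone]
  have e1 : numComponentsDel G v S = Nat.card GB.ConnectedComponent := rfl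
  have e2 : numComponents G S = Nat.card GA.ConnectedComponent := rfl
  have e3 : d = Nat.card GK.ConnectedComponent := rfl
  have hkey : Nat.card GB.ConnectedComponent + 1 = Nat.card GA.ConnectedComponent + d := by
    omega
  -- `d ≥ 1`
  obtain ⟨w, hadj, hwS⟩ := hw
  have hwA : w ∈ A := hwS
  have hwne : (⟨w, hwA⟩ : ↥A) ≠ vc := by
    intro h
    exact hadj.ne' ((congrArg Subtype.val h).trans hvc)
  have hwK : (⟨w, hwA⟩ : ↥A) ∈ Kdel := by
    refine memKdel _ ?_ hwne
    exact (SimpleGraph.Adj.reachable (by exact hadj.symm : GA.Adj ⟨w, hwA⟩ vc))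
  haveI : Nonempty GK.ConnectedComponent := ⟨GK.connectedComponentMk ⟨⟨w, hwA⟩, hwK⟩⟩
  have hd1 : 1 ≤ d := by rw [e3]; exact Nat.card_pos
  -- cardinalities of the vertex sets
  have cardB : Nat.card ↥B = n - (S.card + 1) := by
    have hBeq : B = (↑(insert v S) : Set (Fin n))ᶜ := by
      simp only [B, Finset.coe_insert, Set.insert_eq, Set.union_comm]
    rw [hBeq, Nat.card_eq_fintype_card, Fintype.card_compl_set]
    simp [Finset.card_insert_of_notMem hv]
  have cardA : Nat.card ↥A = n - S.card := by
    rw [Nat.card_eq_fintype_card]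
    show Fintype.card ↥((↑S : Set (Fin n))ᶜ) = n - S.card
    rw [Fintype.card_compl_set]
    simp
  have hbound : Nat.card GB.ConnectedComponent ≤ Nat.card ↥B :=
    Nat.card_le_card_of_surjective GB.connectedComponentMk fun c => c.exists_rep
  have hAone : 1 ≤ Nat.card ↥A := by
    haveI : Nonempty ↥A := ⟨vc⟩
    exact Nat.card_pos
  have hSn : S.card ≤ n := by
    simpa using Finset.card_le_univ S
  have hbOf : bOf G S = 2 * S.card + (n - S.card) - numComponents G S := rfl
  have hbOfDel : bOfDel G v S
      = 2 * S.card + ((n - 1) - S.card) - numComponentsDel G v S := rfl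
  rw [e1] at hbOfDel
  rw [e2] at hbOf
  refine ⟨hd1, ?_, ?_⟩ <;> omega
end

section
/- Let G be a finite simple graph on vertex set [n] with [n] = A ⊔ B ⊔ C a partition into nonempty sets such that: the induced subgraph of G on B is a complete graph, no edge of G joins a vertex of A to a vertex of C, and the labels satisfy a < b < c whenever a ∈ A, b ∈ B, c ∈ C. Then for every admissible path P of G, either all vertices of P lie in A ∪ B, or all vertices of P lie in B ∪ C. -/
/-- A walk is an induced path if it is a path and no two non-consecutive
vertices of the walk are adjacent in `G`. -/
def IsInducedPath {V : Type*} (G : SimpleGraph V) {i j : V} (p : G.Walk i j) :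
    Prop :=
  p.IsPath ∧ ∀ a b : Fin p.support.length, (a : ℕ) + 1 < (b : ℕ) →
    ¬ G.Adj (p.support.get a) (p.support.get b)

/-- A path `P` from `i` to `j` with `i < j` is admissible if it is an induced
path and every interior vertex `u` of `P` satisfies `u < i` or `u > j`. -/
def IsAdmissible {V : Type*} [LinearOrder V] (G : SimpleGraph V) {i j : V}
    (p : G.Walk i j) : Prop :=
  i < j ∧ IsInducedPath G p ∧
    ∀ u ∈ p.support, u ≠ i → u ≠ j → (u < i ∨ j < u)

/-!
On an induced path the vertices of the clique `B` occupy at most two consecutive positions, and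
since no edge joins `A` to `C`, the path can only enter or leave `A` (or `C`) through `B`.
Hence the vertices of the path in `A` form an initial or a final segment, and so do those in `C`.
If the path met both `A` and `C`, one endpoint would lie in `A` and the other in `C`; as
`A < C`, these are `i ∈ A` and `j ∈ C`. Leaving `A` the path then visits an interior vertex
`b ∈ B`, and `i < b < j` contradicts admissibility.
-/

theorem Nat.exists_boundary_of_le {P : ℕ → Prop} {a b : ℕ} (hab : a ≤ b) (ha : P a)
    (hb : ¬ P b) : ∃ k, a ≤ k ∧ k < b ∧ P k ∧ ¬ P (k + 1) := by
  by_contra! h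
  have hP : ∀ k, a ≤ k → k ≤ b → P k := by
    intro k hak
    induction k, hak using Nat.le_induction with
    | base => exact fun _ ↦ ha
    | succ k hak ih => exact fun hkb ↦ h k hak (by omega) (ih (by omega))
  exact hb (hP b hab le_rfl)

namespace SimpleGraph.Walk

variable {V : Type*} {G : SimpleGraph V} {u v : V} (p : G.Walk u v) {S B : Set V}

theorem exists_getVert_mem_after_exit (hS : ∀ s ∈ S, G.neighborSet s ⊆ S ∪ B) {a b : ℕ}
    (hab : a ≤ b) (hb : b ≤ p.length) (haS : p.getVert a ∈ S) (hbS : p.getVert b ∉ S) :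
    ∃ k, a < k ∧ k ≤ b ∧ p.getVert k ∈ B := by
  obtain ⟨k, hak, hkb, hkS, hk₁S⟩ :=
    Nat.exists_boundary_of_le (P := fun k ↦ p.getVert k ∈ S) hab haS hbS
  exact ⟨k + 1, by omega, hkb, (hS _ hkS (p.adj_getVert_succ (by omega))).resolve_left hk₁S⟩

theorem exists_getVert_mem_before_entry (hS : ∀ s ∈ S, G.neighborSet s ⊆ S ∪ B) {a b : ℕ}
    (hab : a ≤ b) (hb : b ≤ p.length) (haS : p.getVert a ∉ S) (hbS : p.getVert b ∈ S) :
    ∃ k, a ≤ k ∧ k < b ∧ p.getVert k ∈ B := by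
  obtain ⟨k, hak, hkb, hkS, hk₁S⟩ :=
    Nat.exists_boundary_of_le (P := fun k ↦ p.getVert k ∉ S) hab haS (not_not.2 hbS)
  have hadj : G.Adj (p.getVert (k + 1)) (p.getVert k) := (p.adj_getVert_succ (by omega)).symm
  exact ⟨k, hak, hkb, (hS _ (not_not.1 hk₁S) hadj).resolve_left hkS⟩

end SimpleGraph.Walk

namespace IsInducedPath

open SimpleGraph

variable {V : Type*} {G : SimpleGraph V} {u v : V} {p : G.Walk u v}

theorem not_adj_getVert (hp : IsInducedPath G p) {a b : ℕ} (hab : a + 1 < b)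
    (hb : b ≤ p.length) : ¬ G.Adj (p.getVert a) (p.getVert b) := by
  rw [p.getVert_eq_support_getElem (by omega), p.getVert_eq_support_getElem hb]
  exact hp.2 ⟨a, by rw [p.length_support]; omega⟩ ⟨b, by rw [p.length_support]; omega⟩ hab

theorem eq_succ_of_getVert_mem_clique (hp : IsInducedPath G p) {B : Set V} (hB : G.IsClique B)
    {a b : ℕ} (hab : a < b) (hb : b ≤ p.length) (haB : p.getVert a ∈ B)
    (hbB : p.getVert b ∈ B) : b = a + 1 := by
  by_contra hne
  have hvert : p.getVert a ≠ p.getVert b := fun h ↦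
    hab.ne (hp.1.getVert_injOn (by simp only [Set.mem_ofPred_eq]; omega) hb h)
  exact hp.not_adj_getVert (by omega) hb (hB haB hbB hvert)

theorem start_mem_or_end_mem (hp : IsInducedPath G p) {S B : Set V} (hB : G.IsClique B)
    (hS : ∀ s ∈ S, G.neighborSet s ⊆ S ∪ B) {x : ℕ} (hx : x ≤ p.length)
    (hxS : p.getVert x ∈ S) : u ∈ S ∨ v ∈ S := by
  by_contra! h
  obtain ⟨k₁, -, hk₁x, hk₁B⟩ :=
    p.exists_getVert_mem_before_entry hS (Nat.zero_le x) hx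
      (by rw [Walk.getVert_zero]; exact h.1) hxS
  obtain ⟨k₂, hxk₂, hk₂, hk₂B⟩ :=
    p.exists_getVert_mem_after_exit hS hx le_rfl hxS (by rw [Walk.getVert_length]; exact h.2)
  have := hp.eq_succ_of_getVert_mem_clique hB (by omega) (by omega) hk₁B hk₂B
  omega

end IsInducedPath

theorem admissible_path_subset_general {n : ℕ} (G : SimpleGraph (Fin n))
    (A B C : Set (Fin n))
    (hcover : A ∪ B ∪ C = Set.univ)
    (hAC : Disjoint A C)
    (hBcomplete : ∀ a ∈ B, ∀ b ∈ B, a ≠ b → G.Adj a b)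
    (hnoAC : ∀ a ∈ A, ∀ c ∈ C, ¬ G.Adj a c)
    (hABlt : ∀ a ∈ A, ∀ b ∈ B, a < b) (hBClt : ∀ b ∈ B, ∀ c ∈ C, b < c)
    (hAClt : ∀ a ∈ A, ∀ c ∈ C, a < c) :
    ∀ (i j : Fin n) (p : G.Walk i j), IsAdmissible G p →
      (∀ u ∈ p.support, u ∈ A ∪ B) ∨ (∀ u ∈ p.support, u ∈ B ∪ C) := by
  rintro i j p ⟨hij, hp, hinterior⟩
  have hmem (w : Fin n) : w ∈ A ∨ w ∈ B ∨ w ∈ C := by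
    simpa only [Set.mem_union, or_assoc] using Set.eq_univ_iff_forall.1 hcover w
  have hA (a : Fin n) (ha : a ∈ A) : G.neighborSet a ⊆ A ∪ B := fun w hw ↦
    (hmem w).elim Or.inl fun h ↦ h.elim Or.inr fun hwC ↦ absurd hw (hnoAC a ha w hwC)
  have hC (c : Fin n) (hc : c ∈ C) : G.neighborSet c ⊆ C ∪ B := fun w hw ↦
    (hmem w).elim (fun hwA ↦ absurd hw.symm (hnoAC w hwA c hc)) fun h ↦ h.elim Or.inr Or.inl
  by_contra! h
  obtain ⟨⟨_, hyp, hyAB⟩, _, hxp, hxBC⟩ := h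
  obtain ⟨x, rfl, hx⟩ := SimpleGraph.Walk.mem_support_iff_exists_getVert.1 hxp
  obtain ⟨y, rfl, hy⟩ := SimpleGraph.Walk.mem_support_iff_exists_getVert.1 hyp
  have hxA : p.getVert x ∈ A := by have := hmem (p.getVert x); simp_all
  have hyC : p.getVert y ∈ C := by have := hmem (p.getVert y); simp_all
  obtain ⟨hiA, hjC⟩ : i ∈ A ∧ j ∈ C := by
    rcases hp.start_mem_or_end_mem hBcomplete hA hx hxA with hiA | hjA <;>
    rcases hp.start_mem_or_end_mem hBcomplete hC hy hyC with hiC | hjC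
    · exact absurd hiC (Set.disjoint_left.1 hAC hiA)
    · exact ⟨hiA, hjC⟩
    · exact absurd (hAClt j hjA i hiC) hij.not_gt
    · exact absurd hjC (Set.disjoint_left.1 hAC hjA)
  obtain ⟨k, -, -, hkB⟩ := p.exists_getVert_mem_after_exit hA (Nat.zero_le _) le_rfl
    (by rwa [SimpleGraph.Walk.getVert_zero])
    (by rw [SimpleGraph.Walk.getVert_length]; exact Set.disjoint_right.1 hAC hjC)
  have hik := hABlt i hiA _ hkB
  have hkj := hBClt _ hkB j hjC
  rcases hinterior _ (p.getVert_mem_support k) hik.ne' hkj.ne with hki | hjk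
  · exact hki.not_gt hik
  · exact hjk.not_gt hkj

/-- Let `[n] = A ⊔ B ⊔ C` be a partition into nonempty sets such that the
induced subgraph on `B` is complete, no edge joins `A` to `C`, and `a < b < c`
whenever `a ∈ A`, `b ∈ B`, `c ∈ C`. Then every admissible path of `G` lies
entirely in `A ∪ B` or entirely in `B ∪ C`. -/
theorem admissible_path_subset {n : ℕ} (G : SimpleGraph (Fin n))
    (A B C : Set (Fin n)) (hA : A.Nonempty) (hB : B.Nonempty) (hC : C.Nonempty)
    (hcover : A ∪ B ∪ C = Set.univ)
    (hAB : Disjoint A B) (hAC : Disjoint A C) (hBC : Disjoint B C)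
    (hBcomplete : ∀ a ∈ B, ∀ b ∈ B, a ≠ b → G.Adj a b)
    (hnoAC : ∀ a ∈ A, ∀ c ∈ C, ¬ G.Adj a c)
    (hABlt : ∀ a ∈ A, ∀ b ∈ B, a < b) (hBClt : ∀ b ∈ B, ∀ c ∈ C, b < c)
    (hAClt : ∀ a ∈ A, ∀ c ∈ C, a < c) :
    ∀ (i j : Fin n) (p : G.Walk i j), IsAdmissible G p →
      (∀ u ∈ p.support, u ∈ A ∪ B) ∨ (∀ u ∈ p.support, u ∈ B ∪ C) :=
  admissible_path_subset_general G A B C hcover hAC hBcomplete hnoAC hABlt hBClt hAClt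
end

section
/- Let G be a finite simple graph on vertex set [n] with [n] = A ⊔ B ⊔ C a partition into nonempty sets such that the induced subgraph of G on B is a complete graph, the labels satisfy a < b < c whenever a ∈ A, b ∈ B, c ∈ C, and, letting H_1 and H_2 denote the induced subgraphs of G on A ∪ B and on B ∪ C respectively, E(G) = E(H_1) ∪ E(H_2). Then the initial ideals with respect to the lexicographic order satisfy in_<(J_G) = in_<(J_{H_1}) + in_<(J_{H_2}). -/
/-!
The inclusion `⊇` is monotonicity. For `⊆`, let `m` be the leading monomial of `f ∈ J_G`.
The specialization `x_v ↦ t_v s_{[v]}`, `y_v ↦ t_v` on the vertices `v` occurring in `m` (with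
`[v]` the component of `v` in the graph these vertices induce), and `x_v, y_v ↦ 0` on the other
vertices, kills `J_G`. So another monomial of `f`, smaller than `m`, has the same image, and
comparing the two yields vertices `i < j` with `x_i y_j ∣ m`, joined by a walk through vertices
occurring in `m`. There are no edges between `A` and `C` and `B` is a clique, so this walk can be
rerouted inside `A ∪ B` or `B ∪ C`, possibly after replacing `i` or `j` by a vertex of `B` on
the walk. Finally, for a path `π` from `i` to `j` and a choice `u_π` of one occurring variable for
each inner vertex, `u_π f_{ij} ∈ J_H` has leading monomial `u_π x_i y_j`, which divides `m`.
-/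

open MvPolynomial

/-- The binomial edge ideal of a graph `G` on `[n]`, inside
`k[x_1,…,x_n,y_1,…,y_n]`. The variables are indexed by `Lex (Fin n ⊕ Fin n)`,
`x_i` being the variable `toLex (Sum.inl i)` and `y_i` the variable
`toLex (Sum.inr i)`; the linear order on the index type then corresponds to
`x_1 > x_2 > … > x_n > y_1 > … > y_n` (smaller index = bigger variable). -/
noncomputable def binomialEdgeIdeal (n : ℕ) (k : Type*) [Field k]
    (G : SimpleGraph (Fin n)) :
    Ideal (MvPolynomial (Lex (Fin n ⊕ Fin n)) k) :=
  Ideal.span {f | ∃ i j : Fin n, G.Adj i j ∧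
    f = X (toLex (Sum.inl i)) * X (toLex (Sum.inr j)) -
      X (toLex (Sum.inl j)) * X (toLex (Sum.inr i))}

/-- The initial ideal of an ideal `I` with respect to the lexicographic
monomial order determined by `x_1 > … > x_n > y_1 > … > y_n`: the ideal
generated by the leading monomials (the `Finsupp.Lex`-largest monomials of the
support) of the nonzero elements of `I`. -/
noncomputable def initialIdeal (n : ℕ) (k : Type*) [Field k]
    (I : Ideal (MvPolynomial (Lex (Fin n ⊕ Fin n)) k)) :
    Ideal (MvPolynomial (Lex (Fin n ⊕ Fin n)) k) :=
  Ideal.span {g | ∃ f ∈ I, f ≠ 0 ∧ ∃ m ∈ f.support,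
    (∀ m' ∈ f.support, toLex m' ≤ toLex m) ∧ g = monomial m (1 : k)}

lemma List.Nodup.sum_map_single_le {σ : Type*} {L : List σ} (hL : L.Nodup) {m : σ →₀ ℕ}
    (hm : ∀ s ∈ L, m s ≠ 0) : (L.map (Finsupp.single · 1)).sum ≤ m := by
  classical
  intro t
  rw [← List.sum_toFinset _ hL, Finsupp.finsetSum_apply]
  simp only [Finsupp.single_apply, Finset.sum_ite_eq', List.mem_toFinset]
  split_ifs with h
  · exact Nat.one_le_iff_ne_zero.2 (hm t h)
  · exact Nat.zero_le _

namespace MvPolynomial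

variable {R σ τ : Type*} [CommSemiring R]

lemma list_prod_map_X {ι : Type*} (g : ι → σ) (L : List ι) :
    (L.map fun v => (X (g v) : MvPolynomial σ R)).prod =
      monomial (L.map fun v => Finsupp.single (g v) 1).sum 1 := by
  induction L with
  | nil => simp
  | cons s L ih =>
    rw [List.map_cons, List.prod_cons, ih, List.map_cons, List.sum_cons, X, monomial_mul, one_mul]

variable (p : σ → Prop) [DecidablePred p] (w : σ → τ →₀ ℕ)

lemma aeval_ite_monomial_monomial (u : σ →₀ ℕ) (c : R) :
    aeval (fun s => if p s then monomial (w s) (1 : R) else 0) (monomial u c) =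
      if ∀ s ∈ u.support, p s then monomial (Finsupp.weight w u) c else 0 := by
  rw [aeval_monomial, Finsupp.prod]
  split_ifs with h
  · rw [Finset.prod_congr rfl fun s hs => by rw [if_pos (h s hs), monomial_pow, one_pow],
      ← monomial_sum_one, algebraMap_eq, C_mul_monomial, mul_one, Finsupp.weight_apply,
      Finsupp.sum]
  · push Not at h
    obtain ⟨s, hs, hps⟩ := h
    rw [Finset.prod_eq_zero hs (by rw [if_neg hps, zero_pow (Finsupp.mem_support_iff.1 hs)]),
      mul_zero]

lemma exists_ne_weight_eq_of_aeval_eq_zero {f : MvPolynomial σ R}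
    (hf : aeval (fun s => if p s then monomial (w s) (1 : R) else 0) f = 0)
    {m : σ →₀ ℕ} (hm : m ∈ f.support) (hp : ∀ s ∈ m.support, p s) :
    ∃ m' ∈ f.support, m' ≠ m ∧ Finsupp.weight w m' = Finsupp.weight w m := by
  classical
  by_contra! hne
  have hcoeff : coeff (Finsupp.weight w m)
      (aeval (fun s => if p s then monomial (w s) (1 : R) else 0) f) = coeff m f := by
    conv_lhs => rw [f.as_sum, map_sum, coeff_sum]
    rw [Finset.sum_eq_single m (fun u hu hum => ?_) (fun h => absurd hm h),
      aeval_ite_monomial_monomial, if_pos hp, coeff_monomial, if_pos rfl]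
    rw [aeval_ite_monomial_monomial]
    split_ifs
    · rw [coeff_monomial, if_neg (hne u hu hum)]
    · rw [coeff_zero]
  rw [hf, coeff_zero] at hcoeff
  exact mem_support_iff.1 hm hcoeff.symm

end MvPolynomial

namespace SimpleGraph.Walk

variable {V : Type*} {G H : SimpleGraph V} {P B : Set V}

/-- Every excursion of the walk outside `P` leaves and re-enters `P` through `B`, and one edge of
the clique `B` shortcuts it. -/
lemma exists_reroute (hB : G.IsClique B) (hBP : B ⊆ P)
    (hH : ∀ a b, G.Adj a b → a ∈ P → b ∈ P → H.Adj a b)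
    (hcut : ∀ a b, G.Adj a b → a ∈ P → b ∉ P → a ∈ B) {u v : V} (w : G.Walk u v) (hv : v ∈ P) :
    (u ∈ P → ∃ w' : H.Walk u v, w'.support ⊆ w.support) ∧
      (u ∉ P → ∃ b ∈ B, b ∈ w.support ∧ ∃ w' : H.Walk b v, w'.support ⊆ w.support) := by
  induction w with
  | nil => exact ⟨fun _ => ⟨.nil, List.Subset.refl _⟩, fun hu => absurd hv hu⟩
  | @cons u x v hux w ih =>
    obtain ⟨ih₁, ih₂⟩ := ih hv
    simp only [support_cons]
    constructor
    · intro hu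
      by_cases hx : x ∈ P
      · obtain ⟨w', hw'⟩ := ih₁ hx
        exact ⟨.cons (hH u x hux hu hx) w', List.cons_subset_cons u hw'⟩
      · obtain ⟨b, hb, -, w', hw'⟩ := ih₂ hx
        by_cases hub : u = b
        · subst hub
          exact ⟨w', List.subset_cons_of_subset u hw'⟩
        · have hub' : G.Adj u b := hB (hcut u x hux hu hx) hb hub
          exact ⟨.cons (hH u b hub' hu (hBP hb)) w', List.cons_subset_cons u hw'⟩
    · intro hu
      by_cases hx : x ∈ P
      · obtain ⟨w', hw'⟩ := ih₁ hx
        exact ⟨x, hcut x u hux.symm hx hu, by simp, w', List.subset_cons_of_subset u hw'⟩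
      · obtain ⟨b, hb, hbw, w', hw'⟩ := ih₂ hx
        exact ⟨b, hb, List.mem_cons_of_mem u hbw, w', List.subset_cons_of_subset u hw'⟩

end SimpleGraph.Walk

namespace BinomialEdgeIdeal

variable {n : ℕ} {k : Type*} [Field k]

abbrev xvar (v : Fin n) : Lex (Fin n ⊕ Fin n) := toLex (Sum.inl v)

abbrev yvar (v : Fin n) : Lex (Fin n ⊕ Fin n) := toLex (Sum.inr v)

def vertexOf (s : Lex (Fin n ⊕ Fin n)) : Fin n := Sum.elim id id (ofLex s)

@[simp] lemma vertexOf_xvar (v : Fin n) : vertexOf (xvar v) = v := rfl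

@[simp] lemma vertexOf_yvar (v : Fin n) : vertexOf (yvar v) = v := rfl

lemma xvar_lt_xvar_iff {u v : Fin n} : xvar u < xvar v ↔ u < v := Sum.Lex.inl_lt_inl_iff

lemma xvar_lt_yvar (u v : Fin n) : xvar u < yvar v := Sum.Lex.inl_lt_inr u v

lemma exists_eq_xvar_of_lt_xvar {s : Lex (Fin n ⊕ Fin n)} {i : Fin n} (h : s < xvar i) :
    ∃ u < i, s = xvar u := by
  rcases s with u | u
  · exact ⟨u, xvar_lt_xvar_iff.1 h, rfl⟩
  · exact absurd h Sum.Lex.not_inr_lt_inl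

variable (k) in
noncomputable def edgeBinomial (i j : Fin n) : MvPolynomial (Lex (Fin n ⊕ Fin n)) k :=
  X (xvar i) * X (yvar j) - X (xvar j) * X (yvar i)

lemma edgeBinomial_mem {G : SimpleGraph (Fin n)} {i j : Fin n} (h : G.Adj i j) :
    edgeBinomial k i j ∈ binomialEdgeIdeal n k G :=
  Ideal.subset_span ⟨i, j, h, rfl⟩

lemma binomialEdgeIdeal_mono {G H : SimpleGraph (Fin n)} (h : H ≤ G) :
    binomialEdgeIdeal n k H ≤ binomialEdgeIdeal n k G :=
  Ideal.span_mono fun _ ⟨i, j, hij, hf⟩ => ⟨i, j, h hij, hf⟩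

lemma initialIdeal_mono {I J : Ideal (MvPolynomial (Lex (Fin n ⊕ Fin n)) k)} (h : I ≤ J) :
    initialIdeal n k I ≤ initialIdeal n k J :=
  Ideal.span_mono fun _ ⟨f, hf, hf0, d, hd, hmax, hg⟩ => ⟨f, h hf, hf0, d, hd, hmax, hg⟩

lemma X_xvar_mul_edgeBinomial (a b c : Fin n) :
    X (xvar b) * edgeBinomial k a c =
      X (xvar a) * edgeBinomial k b c + X (xvar c) * edgeBinomial k a b := by
  simp only [edgeBinomial]; ring

lemma X_yvar_mul_edgeBinomial (a b c : Fin n) :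
    X (yvar b) * edgeBinomial k a c =
      X (yvar a) * edgeBinomial k b c + X (yvar c) * edgeBinomial k a b := by
  simp only [edgeBinomial]; ring

lemma prod_mul_edgeBinomial_mem {H : SimpleGraph (Fin n)}
    (ε : Fin n → MvPolynomial (Lex (Fin n ⊕ Fin n)) k)
    (hε : ∀ v, ε v = X (xvar v) ∨ ε v = X (yvar v)) {a b c : Fin n} (hab : H.Adj a b)
    (w : H.Walk b c) :
    (w.support.dropLast.map ε).prod * edgeBinomial k a c ∈ binomialEdgeIdeal n k H := by
  induction w generalizing a with
  | nil => simpa using edgeBinomial_mem hab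
  | @cons b d c hbd w ih =>
    rw [SimpleGraph.Walk.support_cons, List.dropLast_cons_of_ne_nil w.support_ne_nil,
      List.map_cons, List.prod_cons, mul_comm (ε b), mul_assoc]
    obtain hb | hb := hε b
    · rw [hb, X_xvar_mul_edgeBinomial, mul_add, mul_left_comm]
      exact add_mem (Ideal.mul_mem_left _ _ (ih hbd))
        (Ideal.mul_mem_left _ _ (Ideal.mul_mem_left _ _ (edgeBinomial_mem hab)))
    · rw [hb, X_yvar_mul_edgeBinomial, mul_add, mul_left_comm]
      exact add_mem (Ideal.mul_mem_left _ _ (ih hbd))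
        (Ideal.mul_mem_left _ _ (Ideal.mul_mem_left _ _ (edgeBinomial_mem hab)))

lemma monomial_mem_initialIdeal_of_le {I : Ideal (MvPolynomial (Lex (Fin n ⊕ Fin n)) k)}
    {f : MvPolynomial (Lex (Fin n ⊕ Fin n)) k} (hf : f ∈ I) {d : Lex (Fin n ⊕ Fin n) →₀ ℕ}
    (hd : d ∈ f.support) (hmax : ∀ d' ∈ f.support, toLex d' ≤ toLex d)
    {m : Lex (Fin n ⊕ Fin n) →₀ ℕ} (hdm : d ≤ m) :
    monomial m (1 : k) ∈ initialIdeal n k I := by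
  rw [← tsub_add_cancel_of_le hdm, ← one_mul (1 : k), ← monomial_mul]
  exact Ideal.mul_mem_left _ _
    (Ideal.subset_span ⟨f, hf, fun h => by simp [h] at hd, d, hd, hmax, rfl⟩)

lemma monomial_mul_edgeBinomial (Q : Lex (Fin n ⊕ Fin n) →₀ ℕ) (i j : Fin n) :
    monomial Q (1 : k) * edgeBinomial k i j =
      monomial (Q + Finsupp.single (xvar i) 1 + Finsupp.single (yvar j) 1) 1 -
        monomial (Q + Finsupp.single (xvar j) 1 + Finsupp.single (yvar i) 1) 1 := by
  simp only [edgeBinomial, X, monomial_mul, mul_sub, one_mul, add_assoc]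

lemma toLex_add_single_lt {i j : Fin n} (hij : i < j) (Q : Lex (Fin n ⊕ Fin n) →₀ ℕ) :
    toLex (Q + Finsupp.single (xvar j) 1 + Finsupp.single (yvar i) 1) <
      toLex (Q + Finsupp.single (xvar i) 1 + Finsupp.single (yvar j) 1) := by
  refine Finsupp.Lex.lt_iff.2 ⟨xvar i, fun s hs => ?_, ?_⟩
  · obtain ⟨u, hu, rfl⟩ := exists_eq_xvar_of_lt_xvar hs
    simp [hu.ne', (hu.trans hij).ne']
  · simp [hij.ne]

lemma monomial_mem_initialIdeal_of_mul_edgeBinomial_mem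
    {I : Ideal (MvPolynomial (Lex (Fin n ⊕ Fin n)) k)} {i j : Fin n} (hij : i < j)
    {Q m : Lex (Fin n ⊕ Fin n) →₀ ℕ} (hQ : monomial Q (1 : k) * edgeBinomial k i j ∈ I)
    (hm : Q + Finsupp.single (xvar i) 1 + Finsupp.single (yvar j) 1 ≤ m) :
    monomial m (1 : k) ∈ initialIdeal n k I := by
  classical
  have hlt := toLex_add_single_lt hij Q
  rw [monomial_mul_edgeBinomial] at hQ
  refine monomial_mem_initialIdeal_of_le hQ ?_ (fun d hd => ?_) hm
  · rw [mem_support_iff, coeff_sub, coeff_monomial, coeff_monomial, if_pos rfl,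
      if_neg (fun h => hlt.ne (congrArg toLex h)), sub_zero]
    exact one_ne_zero
  · rcases Finset.mem_union.1 (support_sub _ _ _ hd) with h | h <;>
      rw [support_monomial, if_neg one_ne_zero, Finset.mem_singleton] at h <;> subst h
    · exact le_rfl
    · exact hlt.le

abbrev vertexSupport (m : Lex (Fin n ⊕ Fin n) →₀ ℕ) : Set (Fin n) :=
  {v | m (xvar v) ≠ 0 ∨ m (yvar v) ≠ 0}

def occurringVar (m : Lex (Fin n ⊕ Fin n) →₀ ℕ) (v : Fin n) : Lex (Fin n ⊕ Fin n) :=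
  if m (xvar v) ≠ 0 then xvar v else yvar v

lemma vertexOf_occurringVar (m : Lex (Fin n ⊕ Fin n) →₀ ℕ) (v : Fin n) :
    vertexOf (occurringVar m v) = v := by
  unfold occurringVar; split_ifs <;> rfl

lemma occurringVar_ne_zero {m : Lex (Fin n ⊕ Fin n) →₀ ℕ} {v : Fin n}
    (hv : v ∈ vertexSupport m) : m (occurringVar m v) ≠ 0 := by
  unfold occurringVar; split_ifs with h
  exacts [h, hv.resolve_left h]

lemma X_occurringVar (m : Lex (Fin n ⊕ Fin n) →₀ ℕ) (v : Fin n) :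
    (X (occurringVar m v) : MvPolynomial (Lex (Fin n ⊕ Fin n)) k) = X (xvar v) ∨
      (X (occurringVar m v) : MvPolynomial (Lex (Fin n ⊕ Fin n)) k) = X (yvar v) := by
  unfold occurringVar; split_ifs <;> simp

lemma monomial_mem_initialIdeal_of_isPath {H : SimpleGraph (Fin n)}
    {m : Lex (Fin n ⊕ Fin n) →₀ ℕ} {i j : Fin n} (hij : i < j) (hi : m (xvar i) ≠ 0)
    (hj : m (yvar j) ≠ 0) (p : H.Walk i j) (hp : p.IsPath)
    (hpm : ∀ v ∈ p.support, v ∈ vertexSupport m) :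
    monomial m (1 : k) ∈ initialIdeal n k (binomialEdgeIdeal n k H) := by
  cases p with
  | nil => exact absurd hij (lt_irrefl i)
  | @cons _ b _ hib p =>
    set l := p.support.dropLast
    have hsupp : p.support = l ++ [j] := by
      conv_lhs => rw [← List.dropLast_append_getLast p.support_ne_nil, p.getLast_support]
    have hnodup := hp.support_nodup
    rw [SimpleGraph.Walk.support_cons, hsupp] at hnodup
    obtain ⟨hil, hlj⟩ := List.nodup_cons.1 hnodup
    obtain ⟨hjl, hl⟩ : j ∉ l ∧ l.Nodup := by simpa [List.nodup_append_comm (l₁ := l)] using hlj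
    set vr := occurringVar m
    have hmem := prod_mul_edgeBinomial_mem (k := k) (fun v => X (vr v)) (X_occurringVar m) hib p
    rw [list_prod_map_X] at hmem
    refine monomial_mem_initialIdeal_of_mul_edgeBinomial_mem hij hmem ?_
    have hvr : ∀ s ∈ l.map vr, vertexOf s ∈ l := by
      simp only [List.mem_map]; rintro _ ⟨v, hv, rfl⟩; rwa [vertexOf_occurringVar]
    have hle := List.Nodup.sum_map_single_le (L := xvar i :: yvar j :: l.map vr) (m := m)
      ?nodup ?pos
    · convert hle using 1
      simp only [List.map_cons, List.sum_cons, List.map_map, Function.comp_def]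
      abel
    · simp only [List.nodup_cons, List.mem_cons, not_or]
      exact ⟨⟨by simp, fun h => hil (List.mem_append_left _ (hvr _ h))⟩, fun h => hjl (hvr _ h),
        hl.map (Function.LeftInverse.injective (vertexOf_occurringVar m))⟩
    · simp only [List.mem_cons, List.mem_map]
      rintro s (rfl | rfl | ⟨v, hv, rfl⟩)
      exacts [hi, hj, occurringVar_ne_zero (hpm v (by simp [hsupp, hv]))]

lemma monomial_mem_initialIdeal_of_walk {H : SimpleGraph (Fin n)}
    {m : Lex (Fin n ⊕ Fin n) →₀ ℕ} {i j : Fin n} (hij : i < j) (hi : m (xvar i) ≠ 0)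
    (hj : m (yvar j) ≠ 0) (w : H.Walk i j) (hwm : ∀ v ∈ w.support, v ∈ vertexSupport m) :
    monomial m (1 : k) ∈ initialIdeal n k (binomialEdgeIdeal n k H) :=
  monomial_mem_initialIdeal_of_isPath hij hi hj w.bypass w.bypass_isPath
    fun v hv => hwm v (w.support_bypass_subset_support hv)

/-- The exponent of the image of a variable under `x_v ↦ t_v s_{c v}`, `y_v ↦ t_v`, the variables
`t_v` being indexed by `Sum.inl v` and `s_γ` by `Sum.inr γ`. -/
noncomputable def classWeight {κ : Type*} (c : Fin n → κ) (s : Lex (Fin n ⊕ Fin n)) :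
    (Fin n ⊕ κ) →₀ ℕ :=
  Sum.elim (fun v => Finsupp.single (.inl v) 1 + Finsupp.single (.inr (c v)) 1)
    (fun v => Finsupp.single (.inl v) 1) (ofLex s)

lemma weight_classWeight_inl {κ : Type*} (c : Fin n → κ) (u : Lex (Fin n ⊕ Fin n) →₀ ℕ)
    (v : Fin n) : Finsupp.weight (classWeight c) u (.inl v) = u (xvar v) + u (yvar v) := by
  classical
  rw [Finsupp.weight_eq_sum, Finsupp.finsetSum_apply, ← toLex.sum_comp, Fintype.sum_sum_type]
  simp [classWeight, Finsupp.single_apply]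

lemma weight_classWeight_inr {κ : Type*} [DecidableEq κ] (c : Fin n → κ)
    (u : Lex (Fin n ⊕ Fin n) →₀ ℕ) (γ : κ) :
    Finsupp.weight (classWeight c) u (.inr γ) = ∑ v with c v = γ, u (xvar v) := by
  classical
  rw [Finsupp.weight_eq_sum, Finsupp.finsetSum_apply, ← toLex.sum_comp, Fintype.sum_sum_type]
  simp [classWeight, Finsupp.single_apply, Finset.sum_filter]

/-- At the first variable where `m'` falls below `m` there is an `x_i`, and the balance of the
`x`-degrees inside the class of `i` forces a later `x_j` in that class to rise, at the expense
of `y_j`. -/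
lemma exists_lt_of_weight_classWeight_eq {κ : Type*} (c : Fin n → κ)
    {m m' : Lex (Fin n ⊕ Fin n) →₀ ℕ}
    (hweight : Finsupp.weight (classWeight c) m' = Finsupp.weight (classWeight c) m)
    (hlt : toLex m' < toLex m) :
    ∃ i j, i < j ∧ c i = c j ∧ m (xvar i) ≠ 0 ∧ m (yvar j) ≠ 0 := by
  have := Classical.decEq κ
  have hvertex (v : Fin n) : m' (xvar v) + m' (yvar v) = m (xvar v) + m (yvar v) := by
    rw [← weight_classWeight_inl c, ← weight_classWeight_inl c, hweight]
  have hclass (γ : κ) : ∑ v with c v = γ, m' (xvar v) = ∑ v with c v = γ, m (xvar v) := by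
    rw [← weight_classWeight_inr, ← weight_classWeight_inr, hweight]
  obtain ⟨s, hbelow, hs⟩ := Finsupp.Lex.lt_iff.1 hlt
  rcases s with i | i
  · change m' (xvar i) < m (xvar i) at hs
    have hbelow' (u : Fin n) (hu : u < i) : m' (xvar u) = m (xvar u) :=
      hbelow _ (xvar_lt_xvar_iff.2 hu)
    obtain ⟨j, hj, hij, hjx⟩ : ∃ j, c j = c i ∧ i < j ∧ m (xvar j) < m' (xvar j) := by
      by_contra! hle
      refine (Finset.sum_lt_sum (s := {v | c v = c i}) (fun v hv => ?_) ⟨i, by simp, hs⟩).ne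
        (hclass (c i))
      rcases lt_trichotomy v i with hvi | rfl | hiv
      · exact (hbelow' v hvi).le
      · exact hs.le
      · exact hle v (by simpa using hv) hiv
    exact ⟨i, j, hij, hj.symm, by omega, by have := hvertex j; omega⟩
  · change m' (yvar i) < m (yvar i) at hs
    have := hvertex i
    have : m' (xvar i) = m (xvar i) := hbelow (xvar i) (xvar_lt_yvar i i)
    omega

abbrev supportGraph (G : SimpleGraph (Fin n)) (m : Lex (Fin n ⊕ Fin n) →₀ ℕ) :
    SimpleGraph (Fin n) :=
  (G.induce (vertexSupport m)).spanningCoe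

/-- On an edge inside `vertexSupport m` both terms of the binomial map to `t_i t_j s_{[i]}`, and
on any other edge both vanish. -/
lemma binomialEdgeIdeal_le_ker (G : SimpleGraph (Fin n)) (m : Lex (Fin n ⊕ Fin n) →₀ ℕ) :
    binomialEdgeIdeal n k G ≤ RingHom.ker (aeval fun s => if vertexOf s ∈ vertexSupport m then
      monomial (classWeight (supportGraph G m).connectedComponentMk s) (1 : k) else 0) := by
  rw [binomialEdgeIdeal, Ideal.span_le]
  rintro _ ⟨i, j, hij, rfl⟩
  rw [SetLike.mem_coe, RingHom.mem_ker]
  simp only [map_sub, map_mul, aeval_X, vertexOf_xvar, vertexOf_yvar]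
  by_cases hi : i ∈ vertexSupport m
  · by_cases hj : j ∈ vertexSupport m
    · have hc : (supportGraph G m).connectedComponentMk i =
          (supportGraph G m).connectedComponentMk j :=
        SimpleGraph.ConnectedComponent.sound
          (SimpleGraph.Adj.reachable ⟨hij.ne, ⟨i, hi⟩, ⟨j, hj⟩, hij, rfl, rfl⟩)
      simp only [hi, hj, if_true, classWeight, ofLex_toLex, Sum.elim_inl, Sum.elim_inr,
        monomial_mul, one_mul, hc, sub_eq_zero]
      congr 2
      abel
    · simp [hj]
  · simp [hi]

lemma exists_walk_of_leadingMonomial {G : SimpleGraph (Fin n)}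
    {f : MvPolynomial (Lex (Fin n ⊕ Fin n)) k} (hf : f ∈ binomialEdgeIdeal n k G)
    {m : Lex (Fin n ⊕ Fin n) →₀ ℕ} (hm : m ∈ f.support)
    (hmax : ∀ m' ∈ f.support, toLex m' ≤ toLex m) :
    ∃ i j, i < j ∧ m (xvar i) ≠ 0 ∧ m (yvar j) ≠ 0 ∧
      ∃ w : G.Walk i j, ∀ v ∈ w.support, v ∈ vertexSupport m := by
  have hm_supp : ∀ s ∈ m.support, vertexOf s ∈ vertexSupport m := by
    rintro (v | v) hs
    exacts [Or.inl (Finsupp.mem_support_iff.1 hs), Or.inr (Finsupp.mem_support_iff.1 hs)]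
  obtain ⟨m', hm', hne, hweight⟩ := exists_ne_weight_eq_of_aeval_eq_zero _ _
    (RingHom.mem_ker.1 (binomialEdgeIdeal_le_ker G m hf)) hm hm_supp
  obtain ⟨i, j, hij, hc, hi, hj⟩ := exists_lt_of_weight_classWeight_eq _ hweight
    ((hmax m' hm').lt_of_ne (toLex.injective.ne hne))
  let p := (SimpleGraph.ConnectedComponent.exact hc).some
  refine ⟨i, j, hij, hi, hj, p.mapLe (SimpleGraph.spanningCoe_induce_le _ _), fun v hv => ?_⟩
  rw [SimpleGraph.Walk.support_mapLe_eq_support] at hv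
  have := SimpleGraph.mem_support_of_mem_walk_support p (SimpleGraph.Walk.not_nil_of_ne hij.ne) hv
  rw [SimpleGraph.support_spanningCoe] at this
  obtain ⟨⟨v', hv'⟩, -, rfl⟩ := this
  exact hv'

section Partition

variable {G H₁ H₂ : SimpleGraph (Fin n)} {A B C : Set (Fin n)}

lemma mem_of_adj_of_notMem_union_left (hAB : Disjoint A B) (hAC : Disjoint A C)
    (hH₁ : ∀ a b : Fin n, H₁.Adj a b ↔ (G.Adj a b ∧ a ∈ A ∪ B ∧ b ∈ A ∪ B))
    (hH₂ : ∀ a b : Fin n, H₂.Adj a b ↔ (G.Adj a b ∧ a ∈ B ∪ C ∧ b ∈ B ∪ C))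
    (hedges : ∀ a b : Fin n, G.Adj a b ↔ (H₁.Adj a b ∨ H₂.Adj a b)) {a b : Fin n}
    (h : G.Adj a b) (ha : a ∈ A ∪ B) (hb : b ∉ A ∪ B) : a ∈ B := by
  rcases (hedges a b).1 h with h₁ | h₂
  · exact absurd ((hH₁ a b).1 h₁).2.2 hb
  · exact ha.resolve_left fun haA =>
      ((hH₂ a b).1 h₂).2.1.elim (Set.disjoint_left.1 hAB haA) (Set.disjoint_left.1 hAC haA)

lemma mem_of_adj_of_notMem_union_right (hAB : Disjoint A B) (hAC : Disjoint A C)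
    (hH₁ : ∀ a b : Fin n, H₁.Adj a b ↔ (G.Adj a b ∧ a ∈ A ∪ B ∧ b ∈ A ∪ B))
    (hH₂ : ∀ a b : Fin n, H₂.Adj a b ↔ (G.Adj a b ∧ a ∈ B ∪ C ∧ b ∈ B ∪ C))
    (hedges : ∀ a b : Fin n, G.Adj a b ↔ (H₁.Adj a b ∨ H₂.Adj a b)) {a b : Fin n}
    (h : G.Adj a b) (ha : a ∈ B ∪ C) (hb : b ∉ B ∪ C) : a ∈ B := by
  rcases (hedges a b).1 h with h₁ | h₂
  · exact ((hH₁ a b).1 h₁).2.1.resolve_left fun haA =>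
      ha.elim (Set.disjoint_left.1 hAB haA) (Set.disjoint_left.1 hAC haA)
  · exact absurd ((hH₂ a b).1 h₂).2.2 hb

lemma monomial_mem_sup_of_walk
    (hcover : A ∪ B ∪ C = Set.univ) (hAB : Disjoint A B) (hAC : Disjoint A C)
    (hB : G.IsClique B) (hABlt : ∀ a ∈ A, ∀ b ∈ B, a < b) (hBClt : ∀ b ∈ B, ∀ c ∈ C, b < c)
    (hAClt : ∀ a ∈ A, ∀ c ∈ C, a < c)
    (hH₁ : ∀ a b : Fin n, H₁.Adj a b ↔ (G.Adj a b ∧ a ∈ A ∪ B ∧ b ∈ A ∪ B))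
    (hH₂ : ∀ a b : Fin n, H₂.Adj a b ↔ (G.Adj a b ∧ a ∈ B ∪ C ∧ b ∈ B ∪ C))
    (hedges : ∀ a b : Fin n, G.Adj a b ↔ (H₁.Adj a b ∨ H₂.Adj a b))
    {m : Lex (Fin n ⊕ Fin n) →₀ ℕ} {i j : Fin n} (hij : i < j) (hi : m (xvar i) ≠ 0)
    (hj : m (yvar j) ≠ 0) (w : G.Walk i j) (hwm : ∀ v ∈ w.support, v ∈ vertexSupport m) :
    monomial m (1 : k) ∈ initialIdeal n k (binomialEdgeIdeal n k H₁) ⊔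
      initialIdeal n k (binomialEdgeIdeal n k H₂) := by
  have reroute₁ {u v : Fin n} (w' : G.Walk u v) :=
    w'.exists_reroute hB Set.subset_union_right (fun a b h ha hb => (hH₁ a b).2 ⟨h, ha, hb⟩)
      fun a b => mem_of_adj_of_notMem_union_left hAB hAC hH₁ hH₂ hedges
  have reroute₂ {u v : Fin n} (w' : G.Walk u v) :=
    w'.exists_reroute hB Set.subset_union_left (fun a b h ha hb => (hH₂ a b).2 ⟨h, ha, hb⟩)
      fun a b => mem_of_adj_of_notMem_union_right hAB hAC hH₁ hH₂ hedges
  have mem {H : SimpleGraph (Fin n)} {u v : Fin n} (huv : u < v) (hu : m (xvar u) ≠ 0)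
      (hv : m (yvar v) ≠ 0) (w' : H.Walk u v) (hw' : w'.support ⊆ w.support) :
      monomial m (1 : k) ∈ initialIdeal n k (binomialEdgeIdeal n k H) :=
    monomial_mem_initialIdeal_of_walk huv hu hv w' fun z hz => hwm z (hw' hz)
  have hmem (v : Fin n) : v ∈ A ∪ B ∪ C := hcover ▸ Set.mem_univ v
  have of_mem_BC (hiBC : i ∈ B ∪ C) :
      monomial m (1 : k) ∈ initialIdeal n k (binomialEdgeIdeal n k H₁) ⊔
        initialIdeal n k (binomialEdgeIdeal n k H₂) := by
    have hjBC : j ∈ B ∪ C := by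
      rcases hmem j with (hjA | hjB) | hjC
      · exact absurd (hiBC.elim (hABlt j hjA i) (hAClt j hjA i)) hij.not_gt
      exacts [.inl hjB, .inr hjC]
    obtain ⟨w₂, hw₂⟩ := (reroute₂ w hjBC).1 hiBC
    exact Submodule.mem_sup_right (mem hij hi hj w₂ hw₂)
  rcases hmem i with (hiA | hiB) | hiC
  · by_cases hjC : j ∈ C
    · have hiBC : i ∉ B ∪ C := fun h =>
        h.elim (Set.disjoint_left.1 hAB hiA) (Set.disjoint_left.1 hAC hiA)
      -- the walk crosses `B` at some `b`; go on from `x_b` in `H₂` or stop at `y_b` in `H₁`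
      obtain ⟨b, hb, hbw, w₂, hw₂⟩ := (reroute₂ w (.inr hjC)).2 hiBC
      rcases hwm b hbw with hxb | hyb
      · exact Submodule.mem_sup_right (mem (hBClt b hb j hjC) hxb hj w₂ hw₂)
      · obtain ⟨w₁, hw₁⟩ := (reroute₁ (w.takeUntil b hbw) (.inr hb)).1 (.inl hiA)
        exact Submodule.mem_sup_left (mem (hABlt i hiA b hb) hi hyb w₁
          (List.Subset.trans hw₁ (w.support_takeUntil_subset_support hbw)))
    · obtain ⟨w₁, hw₁⟩ := (reroute₁ w ((hmem j).resolve_right hjC)).1 (.inl hiA)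
      exact Submodule.mem_sup_left (mem hij hi hj w₁ hw₁)
  · exact of_mem_BC (.inl hiB)
  · exact of_mem_BC (.inr hiC)

end Partition

end BinomialEdgeIdeal

open BinomialEdgeIdeal

theorem initialIdeal_binomialEdgeIdeal_eq_sum_general {n : ℕ} (k : Type*) [Field k]
    (G H₁ H₂ : SimpleGraph (Fin n)) (A B C : Set (Fin n))
    (hcover : A ∪ B ∪ C = Set.univ)
    (hAB : Disjoint A B) (hAC : Disjoint A C)
    (hBcomplete : ∀ a ∈ B, ∀ b ∈ B, a ≠ b → G.Adj a b)
    (hABlt : ∀ a ∈ A, ∀ b ∈ B, a < b) (hBClt : ∀ b ∈ B, ∀ c ∈ C, b < c)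
    (hAClt : ∀ a ∈ A, ∀ c ∈ C, a < c)
    (hH₁ : ∀ a b : Fin n, H₁.Adj a b ↔ (G.Adj a b ∧ a ∈ A ∪ B ∧ b ∈ A ∪ B))
    (hH₂ : ∀ a b : Fin n, H₂.Adj a b ↔ (G.Adj a b ∧ a ∈ B ∪ C ∧ b ∈ B ∪ C))
    (hedges : ∀ a b : Fin n, G.Adj a b ↔ (H₁.Adj a b ∨ H₂.Adj a b)) :
    initialIdeal n k (binomialEdgeIdeal n k G) =
      initialIdeal n k (binomialEdgeIdeal n k H₁) +
        initialIdeal n k (binomialEdgeIdeal n k H₂) := by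
  refine le_antisymm ?_ (sup_le
    (initialIdeal_mono (binomialEdgeIdeal_mono fun a b h => ((hH₁ a b).1 h).1))
    (initialIdeal_mono (binomialEdgeIdeal_mono fun a b h => ((hH₂ a b).1 h).1)))
  rw [initialIdeal, Ideal.span_le]
  rintro _ ⟨f, hf, -, m, hm, hmax, rfl⟩
  obtain ⟨i, j, hij, hi, hj, w, hwm⟩ := exists_walk_of_leadingMonomial hf hm hmax
  exact monomial_mem_sup_of_walk hcover hAB hAC hBcomplete hABlt hBClt hAClt hH₁ hH₂ hedges
    hij hi hj w hwm

/-- Let `[n] = A ⊔ B ⊔ C` be a partition into nonempty sets with the induced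
subgraph on `B` complete and `a < b < c` whenever `a ∈ A`, `b ∈ B`, `c ∈ C`.
Let `H₁` and `H₂` be the induced subgraphs of `G` on `A ∪ B` and on `B ∪ C`
(regarded as graphs on `[n]`), and suppose `E(G) = E(H₁) ∪ E(H₂)`. Then
`in_<(J_G) = in_<(J_{H₁}) + in_<(J_{H₂})` for the lexicographic order `<` with
`x_1 > … > x_n > y_1 > … > y_n`. -/
theorem initialIdeal_binomialEdgeIdeal_eq_sum {n : ℕ} (k : Type*) [Field k]
    (G H₁ H₂ : SimpleGraph (Fin n)) (A B C : Set (Fin n))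
    (hA : A.Nonempty) (hB : B.Nonempty) (hC : C.Nonempty)
    (hcover : A ∪ B ∪ C = Set.univ)
    (hAB : Disjoint A B) (hAC : Disjoint A C) (hBC : Disjoint B C)
    (hBcomplete : ∀ a ∈ B, ∀ b ∈ B, a ≠ b → G.Adj a b)
    (hABlt : ∀ a ∈ A, ∀ b ∈ B, a < b) (hBClt : ∀ b ∈ B, ∀ c ∈ C, b < c)
    (hAClt : ∀ a ∈ A, ∀ c ∈ C, a < c)
    (hH₁ : ∀ a b : Fin n, H₁.Adj a b ↔ (G.Adj a b ∧ a ∈ A ∪ B ∧ b ∈ A ∪ B))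
    (hH₂ : ∀ a b : Fin n, H₂.Adj a b ↔ (G.Adj a b ∧ a ∈ B ∪ C ∧ b ∈ B ∪ C))
    (hedges : ∀ a b : Fin n, G.Adj a b ↔ (H₁.Adj a b ∨ H₂.Adj a b)) :
    initialIdeal n k (binomialEdgeIdeal n k G) =
      initialIdeal n k (binomialEdgeIdeal n k H₁) +
        initialIdeal n k (binomialEdgeIdeal n k H₂) :=
  initialIdeal_binomialEdgeIdeal_eq_sum_general k G H₁ H₂ A B C hcover hAB hAC hBcomplete hABlt
    hBClt hAClt hH₁ hH₂ hedges
end
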